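/- arXiv:1108.0256 — 2 statements merged into one kernel-verified Lean document; each statement's English description precedes it below -/
import Mathlib

section
/- Let S be a nonempty closed subset of ℝ^m and h_n : ℝ^m → ℝ a sequence of functions with associated vector maps V_{h_n}(u) = (h_n(u), u₁,…,u_{m-1}) satisfying V_{h_n}(S) ⊆ S. Suppose X̄ = (x̄,…,x̄) ∈ S with h_n(X̄) = x̄ for all n, and |h_n(X) - x̄| ≤ β ‖X - X̄‖_∞ for all X ∈ S and n, where 0 ≤ β < 1. Then for every X ∈ S, the composed iterates G_n := V_{h_n} ∘ ⋯ ∘ V_{h_1} satisfy ‖G_n(X) - X̄‖_∞ ≤ ‖X - X̄‖_∞ for all n, and G_n(X) → X̄ as n → ∞. -/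
open Filter

/-- The associated vector map `V_f(u₁,…,u_m) = (f(u), u₁,…,u_{m-1})`. -/
def assocVec (m : ℕ) (f : (Fin m → ℝ) → ℝ) (u : Fin m → ℝ) : Fin m → ℝ :=
  fun i =>
    if _h : (i : ℕ) = 0 then f u
    else u ⟨(i : ℕ) - 1, Nat.lt_of_le_of_lt (Nat.sub_le _ _) i.isLt⟩

/-- Composed iterates `G n = V_{h n} ∘ ⋯ ∘ V_{h 1}`, with `G 0 = id`. -/
def iterComp (m : ℕ) (h : ℕ → (Fin m → ℝ) → ℝ) : ℕ → (Fin m → ℝ) → (Fin m → ℝ)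
  | 0 => id
  | n + 1 => assocVec m (h (n + 1)) ∘ iterComp m h n

/-- If each `V_{h n}` maps the nonempty closed set `S` into itself, the constant vector
`Xbar = (x̄,…,x̄) ∈ S` is a common equilibrium, and `|h n X - x̄| ≤ β ‖X - Xbar‖∞` on `S`
with `0 ≤ β < 1`, then the composed iterates satisfy `‖G n X - Xbar‖∞ ≤ ‖X - Xbar‖∞` and
converge to `Xbar`. -/
theorem stmt_12 (m : ℕ) (hm : 1 ≤ m) (S : Set (Fin m → ℝ)) (hS : S.Nonempty)
    (hScl : IsClosed S) (h : ℕ → (Fin m → ℝ) → ℝ)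
    (hinv : ∀ n, ∀ X ∈ S, assocVec m (h n) X ∈ S)
    (xbar : ℝ) (hXbarS : (fun _ : Fin m => xbar) ∈ S)
    (heq : ∀ n, h n (fun _ => xbar) = xbar)
    (β : ℝ) (hβ0 : 0 ≤ β) (hβ1 : β < 1)
    (hcontr : ∀ n, ∀ X ∈ S, |h n X - xbar| ≤ β * ‖X - fun _ => xbar‖) :
    ∀ X ∈ S,
      (∀ n, ‖iterComp m h n X - fun _ => xbar‖ ≤ ‖X - fun _ => xbar‖) ∧
        Tendsto (fun n => iterComp m h n X) atTop (nhds fun _ => xbar) := by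
  intro X hX
  set Xb : Fin m → ℝ := fun _ => xbar with hXbdef
  set Y : ℕ → Fin m → ℝ := fun k => iterComp m h k X with hYdef
  have hY0 : Y 0 = X := rfl
  have hYS : ∀ k, Y k ∈ S := by
    intro k; induction k with
    | zero => simpa [hYdef, iterComp] using hX
    | succ n ih => simpa [hYdef, iterComp] using hinv (n + 1) _ ih
  -- the coordinate formula
  have hcoord : ∀ k (i : Fin m), (i : ℕ) < k →
      Y k i = h (k - (i : ℕ)) (Y (k - (i : ℕ) - 1)) := by
    intro k
    induction k with
    | zero => intro i hi; omega
    | succ n ih =>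
      intro i hi
      show assocVec m (h (n + 1)) (Y n) i = _
      unfold assocVec
      by_cases h0 : (i : ℕ) = 0
      · simp [h0]
      · rw [dif_neg h0]
        have hlt : (i : ℕ) - 1 < n := by omega
        have key := ih ⟨(i : ℕ) - 1,
          Nat.lt_of_le_of_lt (Nat.sub_le _ _) i.isLt⟩ hlt
        simp only [Fin.val_mk] at key
        rw [key]
        have e1 : n - ((i : ℕ) - 1) = n + 1 - (i : ℕ) := by omega
        rw [e1]
  have habs : ∀ k (i : Fin m), |Y k i - xbar| ≤ ‖Y k - Xb‖ := by
    intro k i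
    have := norm_le_pi_norm (Y k - Xb) i
    simpa [Xb, Real.norm_eq_abs] using this
  -- one-step monotonicity
  have hmono : ∀ k, ‖Y (k + 1) - Xb‖ ≤ ‖Y k - Xb‖ := by
    intro k
    apply (pi_norm_le_iff_of_nonneg (norm_nonneg _)).2
    intro i
    have hval : (Y (k + 1) - Xb) i = Y (k + 1) i - xbar := rfl
    rw [hval, Real.norm_eq_abs]
    by_cases h0 : (i : ℕ) = 0
    · have hi : (i : ℕ) < k + 1 := by omega
      rw [hcoord (k + 1) i hi, h0]
      simp only [Nat.sub_zero, Nat.add_sub_cancel]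
      calc |h (k + 1) (Y k) - xbar| ≤ β * ‖Y k - Xb‖ := hcontr (k + 1) _ (hYS k)
        _ ≤ 1 * ‖Y k - Xb‖ := by
            apply mul_le_mul_of_nonneg_right (le_of_lt hβ1) (norm_nonneg _)
        _ = ‖Y k - Xb‖ := one_mul _
    · show |assocVec m (h (k + 1)) (Y k) i - xbar| ≤ _
      unfold assocVec
      rw [dif_neg h0]
      exact habs k _
  have hanti : ∀ a b, a ≤ b → ‖Y b - Xb‖ ≤ ‖Y a - Xb‖ := by
    intro a b hab
    induction b with
    | zero => simp_all
    | succ n ih =>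
      rcases Nat.lt_or_ge a (n + 1) with hlt | hge
      · exact le_trans (hmono n) (ih (by omega))
      · have : a = n + 1 := by omega
        rw [this]
  have hfirst : ∀ n, ‖Y n - Xb‖ ≤ ‖X - Xb‖ := by
    intro n
    have := hanti 0 n (Nat.zero_le n)
    rwa [hY0] at this
  -- contraction over m steps
  have hstep : ∀ n, ‖Y (n + m) - Xb‖ ≤ β * ‖Y n - Xb‖ := by
    intro n
    apply (pi_norm_le_iff_of_nonneg (mul_nonneg hβ0 (norm_nonneg _))).2
    intro i
    have hval : (Y (n + m) - Xb) i = Y (n + m) i - xbar := rfl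
    rw [hval, Real.norm_eq_abs]
    have hi : (i : ℕ) < n + m := by have := i.isLt; omega
    rw [hcoord (n + m) i hi]
    calc |h (n + m - (i : ℕ)) (Y (n + m - (i : ℕ) - 1)) - xbar|
        ≤ β * ‖Y (n + m - (i : ℕ) - 1) - Xb‖ := hcontr _ _ (hYS _)
      _ ≤ β * ‖Y n - Xb‖ := by
          apply mul_le_mul_of_nonneg_left _ hβ0
          apply hanti
          have := i.isLt; omega
  have hpow : ∀ k, ‖Y (k * m) - Xb‖ ≤ β ^ k * ‖X - Xb‖ := by
    intro k
    induction k with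
    | zero => simp [hY0]
    | succ k ih =>
      have e : (k + 1) * m = k * m + m := by ring
      rw [e]
      calc ‖Y (k * m + m) - Xb‖ ≤ β * ‖Y (k * m) - Xb‖ := hstep _
        _ ≤ β * (β ^ k * ‖X - Xb‖) := mul_le_mul_of_nonneg_left ih hβ0
        _ = β ^ (k + 1) * ‖X - Xb‖ := by ring
  refine ⟨hfirst, ?_⟩
  rw [tendsto_iff_norm_sub_tendsto_zero]
  have hbound : ∀ n, ‖Y n - Xb‖ ≤ β ^ (n / m) * ‖X - Xb‖ := by
    intro n
    calc ‖Y n - Xb‖ ≤ ‖Y (n / m * m) - Xb‖ :=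
          hanti _ _ (Nat.div_mul_le_self n m)
      _ ≤ β ^ (n / m) * ‖X - Xb‖ := hpow _
  have hdiv : Tendsto (fun n : ℕ => n / m) atTop atTop := by
    apply tendsto_atTop_atTop.2
    intro b
    exact ⟨b * m, fun n hn => (Nat.le_div_iff_mul_le (by omega)).2 hn⟩
  have hlim : Tendsto (fun n : ℕ => β ^ (n / m) * ‖X - Xb‖) atTop (nhds 0) := by
    have := ((tendsto_pow_atTop_nhds_zero_of_lt_one hβ0 hβ1).comp hdiv).mul_const
      ‖X - Xb‖
    simpa [Function.comp] using this
  exact squeeze_zero (fun n => norm_nonneg _) hbound hlim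
end

section
/- Let h : ℝ^m → ℝ with associated vector map V_h(u) = (h(u), u₁,…,u_{m-1}), and suppose x̄ satisfies h(x̄,…,x̄) = x̄ and |h(X) - x̄| ≤ β ‖X - X̄‖_∞ for all X ∈ ℝ^m, where X̄ = (x̄,…,x̄) and 0 ≤ β < 1. Then for every X ∈ ℝ^m, the iterates V_h^n(X) converge to X̄ as n → ∞, and moreover ‖V_h^{km}(X) - X̄‖_∞ ≤ β^k ‖X - X̄‖_∞ for all k ≥ 1. -/
/-! The map `V_h` never moves a point away from `X̄`, and `m` steps of it contract by `β`,
because after `m` steps every coordinate has been produced by `h`. An orbit of such a map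
shrinks by `β` per block of `m` steps and so converges to `X̄`. -/

open Filter

section Iterate

variable {α : Type*} [PseudoMetricSpace α] {f : α → α} {x : α}

theorem dist_iterate_le_of_forall_dist_le (hf : ∀ y, dist (f y) x ≤ dist y x) (n : ℕ) (y : α) :
    dist (f^[n] y) x ≤ dist y x := by
  induction n generalizing y with
  | zero => rfl
  | succ n ih => exact (ih (f y)).trans (hf y)

theorem dist_iterate_mul_le_pow {m : ℕ} {β : ℝ} (hβ0 : 0 ≤ β)
    (hblock : ∀ y, dist (f^[m] y) x ≤ β * dist y x) (k : ℕ) (y : α) :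
    dist (f^[k * m] y) x ≤ β ^ k * dist y x := by
  induction k with
  | zero => simp
  | succ k ih =>
    calc dist (f^[(k + 1) * m] y) x = dist (f^[m] (f^[k * m] y)) x := by
          rw [← Function.iterate_add_apply, add_one_mul, add_comm]
      _ ≤ β * (β ^ k * dist y x) := (hblock _).trans (mul_le_mul_of_nonneg_left ih hβ0)
      _ = β ^ (k + 1) * dist y x := by ring

theorem tendsto_iterate_of_dist_iterate_le {m : ℕ} {β : ℝ} (hm : 1 ≤ m) (hβ0 : 0 ≤ β)
    (hβ1 : β < 1) (hf : ∀ y, dist (f y) x ≤ dist y x)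
    (hblock : ∀ y, dist (f^[m] y) x ≤ β * dist y x) (y : α) :
    Tendsto (fun n => f^[n] y) atTop (nhds x) := by
  have hbound : ∀ n, dist (f^[n] y) x ≤ β ^ (n / m) * dist y x := fun n => by
    calc dist (f^[n] y) x = dist (f^[n % m] (f^[n / m * m] y)) x := by
          rw [← Function.iterate_add_apply, Nat.mod_add_div']
      _ ≤ β ^ (n / m) * dist y x :=
          (dist_iterate_le_of_forall_dist_le hf _ _).trans (dist_iterate_mul_le_pow hβ0 hblock _ _)
  have hdiv : Tendsto (fun n : ℕ => n / m) atTop atTop :=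
    Nat.tendsto_div_const_atTop (Nat.one_le_iff_ne_zero.mp hm)
  have hpow : Tendsto (fun n : ℕ => β ^ (n / m) * dist y x) atTop (nhds 0) := by
    simpa using ((tendsto_pow_atTop_nhds_zero_of_lt_one hβ0 hβ1).comp hdiv).mul_const (dist y x)
  exact tendsto_iff_dist_tendsto_zero.2 (squeeze_zero (fun _ => dist_nonneg) hbound hpow)

end Iterate

section AssocVec

variable {m : ℕ} {h : (Fin m → ℝ) → ℝ} {xbar β : ℝ}

theorem assocVec_apply_of_val_eq_zero (u : Fin m → ℝ) {i : Fin m} (hi : (i : ℕ) = 0) :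
    assocVec m h u i = h u := by
  simp [assocVec, hi]

theorem assocVec_apply_of_val_ne_zero (u : Fin m → ℝ) {i : Fin m} (hi : (i : ℕ) ≠ 0) :
    assocVec m h u i = u ⟨(i : ℕ) - 1, by omega⟩ := by
  simp [assocVec, hi]

theorem dist_assocVec_le (hβ1 : β ≤ 1)
    (hcontr : ∀ X, dist (h X) xbar ≤ β * dist X (fun _ => xbar)) (Y : Fin m → ℝ) :
    dist (assocVec m h Y) (fun _ => xbar) ≤ dist Y (fun _ => xbar) := by
  refine (dist_pi_le_iff dist_nonneg).2 fun i => ?_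
  by_cases hi : (i : ℕ) = 0
  · rw [assocVec_apply_of_val_eq_zero Y hi]
    exact (hcontr Y).trans (mul_le_of_le_one_left dist_nonneg hβ1)
  · rw [assocVec_apply_of_val_ne_zero Y hi]
    exact dist_le_pi_dist Y (fun _ => xbar) _

theorem dist_iterate_assocVec_apply_le (hβ0 : 0 ≤ β) (hβ1 : β ≤ 1)
    (hcontr : ∀ X, dist (h X) xbar ≤ β * dist X (fun _ => xbar)) (Y : Fin m → ℝ) :
    ∀ (n : ℕ) (i : Fin m), (i : ℕ) < n →
      dist ((assocVec m h)^[n] Y i) xbar ≤ β * dist Y (fun _ => xbar) := by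
  intro n
  induction n with
  | zero => intro i hi; omega
  | succ n ih =>
    intro i hi
    rw [Function.iterate_succ_apply']
    by_cases hi0 : (i : ℕ) = 0
    · rw [assocVec_apply_of_val_eq_zero _ hi0]
      exact (hcontr _).trans <| mul_le_mul_of_nonneg_left
        (dist_iterate_le_of_forall_dist_le (dist_assocVec_le hβ1 hcontr) n Y) hβ0
    · rw [assocVec_apply_of_val_ne_zero _ hi0]
      exact ih _ (show (i : ℕ) - 1 < n by omega)

theorem dist_iterate_assocVec_le (hβ0 : 0 ≤ β) (hβ1 : β ≤ 1)
    (hcontr : ∀ X, dist (h X) xbar ≤ β * dist X (fun _ => xbar)) (Y : Fin m → ℝ) :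
    dist ((assocVec m h)^[m] Y) (fun _ => xbar) ≤ β * dist Y (fun _ => xbar) :=
  (dist_pi_le_iff (by positivity)).2 fun i =>
    dist_iterate_assocVec_apply_le hβ0 hβ1 hcontr Y m i i.isLt

end AssocVec

theorem stmt_13_general (m : ℕ) (hm : 1 ≤ m) (h : (Fin m → ℝ) → ℝ) (xbar : ℝ)
    (β : ℝ) (hβ0 : 0 ≤ β) (hβ1 : β < 1)
    (hcontr : ∀ X : Fin m → ℝ, |h X - xbar| ≤ β * ‖X - fun _ => xbar‖) :
    ∀ X : Fin m → ℝ,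
      Tendsto (fun n => (assocVec m h)^[n] X) atTop (nhds fun _ => xbar) ∧
        ∀ k, 1 ≤ k →
          ‖(assocVec m h)^[k * m] X - fun _ => xbar‖ ≤ β ^ k * ‖X - fun _ => xbar‖ := by
  intro X
  have hcontr' : ∀ X, dist (h X) xbar ≤ β * dist X (fun _ => xbar) := by
    simpa only [dist_eq_norm, Real.norm_eq_abs] using hcontr
  have hstep := dist_assocVec_le hβ1.le hcontr'
  have hblock := dist_iterate_assocVec_le hβ0 hβ1.le hcontr'
  refine ⟨tendsto_iterate_of_dist_iterate_le hm hβ0 hβ1 hstep hblock X, fun k _ => ?_⟩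
  simpa only [dist_eq_norm] using dist_iterate_mul_le_pow hβ0 hblock k X

/-- If `h(x̄,…,x̄) = x̄` and `|h X - x̄| ≤ β ‖X - Xbar‖∞` everywhere with `0 ≤ β < 1`, then
the iterates of `V_h` converge to the constant vector `Xbar`, with
`‖V_h^[k*m] X - Xbar‖∞ ≤ β^k ‖X - Xbar‖∞` for all `k ≥ 1`. -/
theorem stmt_13 (m : ℕ) (hm : 1 ≤ m) (h : (Fin m → ℝ) → ℝ) (xbar : ℝ)
    (heq : h (fun _ => xbar) = xbar) (β : ℝ) (hβ0 : 0 ≤ β) (hβ1 : β < 1)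
    (hcontr : ∀ X : Fin m → ℝ, |h X - xbar| ≤ β * ‖X - fun _ => xbar‖) :
    ∀ X : Fin m → ℝ,
      Tendsto (fun n => (assocVec m h)^[n] X) atTop (nhds fun _ => xbar) ∧
        ∀ k, 1 ≤ k →
          ‖(assocVec m h)^[k * m] X - fun _ => xbar‖ ≤ β ^ k * ‖X - fun _ => xbar‖ :=
  stmt_13_general m hm h xbar β hβ0 hβ1 hcontr
end
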